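/- arXiv:math/0501201 — 2 statements merged into one kernel-verified Lean document; each statement's English description precedes it below -/
import Mathlib

section
/- For every 0 ≤ l ≤ n−1 and all 0 ≤ k, k' ≤ l, the inner products ⟨p_{k,l}, p_{k',l}⟩ := p_{k,l}ᵀ R conj(p_{k',l}) satisfy: ⟨p_{k,l}, p_{k',l}⟩ = 0 whenever k ≠ k', and ⟨p_{k,l}, p_{k,l}⟩ is a strictly positive real number. -/
open Matrix
open scoped ComplexOrder

noncomputable section

/-- The `k`-th standard basis vector of `ℂⁿ` (zero if `k ≥ n`). -/
def eVec (n : ℕ) (k : ℕ) : Fin n → ℂ := fun j => if (j : ℕ) = k then 1 else 0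

/-- `vᵀ R w`. -/
def bform {n : ℕ} (R : Matrix (Fin n) (Fin n) ℂ) (v w : Fin n → ℂ) : ℂ :=
  v ⬝ᵥ R.mulVec w

/-- Joint recursion computing the pair `(p_{k,k+d}, q_{k,k+d})`. -/
def pqAux {n : ℕ} (R : Matrix (Fin n) (Fin n) ℂ) : ℕ → ℕ → (Fin n → ℂ) × (Fin n → ℂ)
  | 0, k => (eVec n k, eVec n k)
  | d + 1, k =>
      let p := (pqAux R d k).1
      let q := (pqAux R d (k + 1)).2
      let l := k + d + 1
      let a := bform R p (eVec n l) / bform R q (eVec n l)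
      let a' := bform R q (eVec n k) / bform R p (eVec n k)
      (p - a • q, q - a' • p)

/-- The orthogonal polynomial `p_{k,l}`. -/
def pVec {n : ℕ} (R : Matrix (Fin n) (Fin n) ℂ) (k l : ℕ) : Fin n → ℂ :=
  (pqAux R (l - k) k).1

/-- The orthogonal polynomial `q_{k,l}`. -/
def qVec {n : ℕ} (R : Matrix (Fin n) (Fin n) ℂ) (k l : ℕ) : Fin n → ℂ :=
  (pqAux R (l - k) k).2

/-- The generalized reflection coefficient `a_{k,l}`. -/
def aCoef {n : ℕ} (R : Matrix (Fin n) (Fin n) ℂ) (k l : ℕ) : ℂ :=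
  bform R (pVec R k (l - 1)) (eVec n l) / bform R (qVec R (k + 1) l) (eVec n l)

/-- The generalized reflection coefficient `a'_{k,l}`. -/
def aCoef' {n : ℕ} (R : Matrix (Fin n) (Fin n) ℂ) (k l : ℕ) : ℂ :=
  bform R (qVec R (k + 1) l) (eVec n k) / bform R (pVec R k (l - 1)) (eVec n k)

/-- `v_{k,l} = q_{k,l}ᵀ R e_l`. -/
def vSc {n : ℕ} (R : Matrix (Fin n) (Fin n) ℂ) (k l : ℕ) : ℂ :=
  bform R (qVec R k l) (eVec n l)

/-- `v'_{k,l} = p_{k,l}ᵀ R e_k`. -/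
def vSc' {n : ℕ} (R : Matrix (Fin n) (Fin n) ℂ) (k l : ℕ) : ℂ :=
  bform R (pVec R k l) (eVec n k)

lemma bform_sub_smul {n : ℕ} (R : Matrix (Fin n) (Fin n) ℂ) (v w u : Fin n → ℂ) (a : ℂ) :
    bform R (v - a • w) u = bform R v u - a * bform R w u := by
  simp [bform, sub_dotProduct, smul_dotProduct, smul_eq_mul]

lemma bform_eVec {n : ℕ} (R : Matrix (Fin n) (Fin n) ℂ) (v : Fin n → ℂ) (j : Fin n) :
    bform R v (eVec n (j : ℕ)) = ∑ i, v i * R i j := by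
  simp only [bform, dotProduct, mulVec, eVec, Fin.val_eq_val]
  congr 1; ext i
  rw [Finset.sum_eq_single j] <;> simp +contextual [eq_comm]

lemma bform_double {n : ℕ} (R : Matrix (Fin n) (Fin n) ℂ) (v w : Fin n → ℂ) :
    bform R v w = ∑ i, ∑ j, v i * R i j * w j := by
  simp [bform, dotProduct, mulVec, Finset.mul_sum, mul_assoc]

lemma bform_expand {n : ℕ} (R : Matrix (Fin n) (Fin n) ℂ) (v w : Fin n → ℂ) :
    bform R v (star w) = ∑ j, (starRingEnd ℂ) (w j) * bform R v (eVec n (j : ℕ)) := by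
  simp only [bform_eVec, bform_double, Pi.star_apply, Finset.mul_sum]
  rw [Finset.sum_comm]
  congr 1; ext j; congr 1; ext i
  rw [Finset.sum_eq_single j]
  · simp [eVec, Complex.star_def]; ring
  · intro b _ hb; simp [eVec, Fin.val_eq_val, hb]
  · simp

lemma bform_herm {n : ℕ} {R : Matrix (Fin n) (Fin n) ℂ} (hR : R.IsHermitian) (v w : Fin n → ℂ) :
    bform R v (star w) = (starRingEnd ℂ) (bform R w (star v)) := by
  simp only [bform_double, map_sum, Pi.star_apply]
  rw [Finset.sum_comm]
  congr 1; ext j; congr 1; ext i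
  have h : ∀ a b, (starRingEnd ℂ) (R a b) = R b a := by
    intro a b
    conv_rhs => rw [← hR]
    simp [Matrix.conjTranspose_apply]
  rw [_root_.map_mul, _root_.map_mul, h]
  simp [Complex.star_def]; ring

lemma bform_self_pos {n : ℕ} {R : Matrix (Fin n) (Fin n) ℂ} (hR : R.PosDef)
    (v : Fin n → ℂ) (hv : v ≠ 0) : 0 < bform R v (star v) := by
  have h := hR.dotProduct_mulVec_pos (x := star v) (by simpa using hv)
  simpa [bform] using h


lemma pq_key {n : ℕ} {R : Matrix (Fin n) (Fin n) ℂ} (hR : R.PosDef) (v : Fin n → ℂ) (m : ℕ) (hm : m < n)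
    (h1 : ∀ j : Fin n, (j : ℕ) ≠ m → (starRingEnd ℂ) (v j) * bform R v (eVec n (j : ℕ)) = 0)
    (h2 : v ⟨m, hm⟩ = 1) :
    bform R v (star v) = bform R v (eVec n m) ∧ 0 < bform R v (star v) := by
  have hv : v ≠ 0 := by
    intro h; rw [h] at h2; simp at h2
  have hpos := bform_self_pos hR v hv
  refine ⟨?_, hpos⟩
  rw [bform_expand]
  rw [Finset.sum_eq_single (⟨m, hm⟩ : Fin n)]
  · simp [h2]
  · intro b _ hb
    exact h1 b (fun h => hb (Fin.ext h))
  · simp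

lemma pq_inv {n : ℕ} {R : Matrix (Fin n) (Fin n) ℂ} (hR : R.PosDef) :
    ∀ d k : ℕ, k + d < n →
    (∀ j : Fin n, ((j : ℕ) < k ∨ k + d < (j : ℕ)) → (pqAux R d k).1 j = 0) ∧
    (∀ j : Fin n, (j : ℕ) = k → (pqAux R d k).1 j = 1) ∧
    (∀ j : Fin n, ((j : ℕ) < k ∨ k + d < (j : ℕ)) → (pqAux R d k).2 j = 0) ∧
    (∀ j : Fin n, (j : ℕ) = k + d → (pqAux R d k).2 j = 1) ∧
    (∀ j : ℕ, k < j → j ≤ k + d → bform R (pqAux R d k).1 (eVec n j) = 0) ∧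
    (∀ j : ℕ, k ≤ j → j < k + d → bform R (pqAux R d k).2 (eVec n j) = 0) := by
  intro d
  induction d with
  | zero =>
    intro k hk
    refine ⟨?_, ?_, ?_, ?_, ?_, ?_⟩
    · intro j hj; simp [pqAux, eVec]; omega
    · intro j hj; simp [pqAux, eVec, hj]
    · intro j hj; simp [pqAux, eVec]; omega
    · intro j hj; simp [pqAux, eVec]; omega
    · intro j h1 h2; omega
    · intro j h1 h2; omega
  | succ d ih =>
    intro k hk
    obtain ⟨hp0, hp1, -, -, hpo, -⟩ := ih k (by omega)
    obtain ⟨-, -, hq0, hq1, -, hqo⟩ := ih (k + 1) (by omega)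
    set p := (pqAux R d k).1 with hp
    set q := (pqAux R d (k + 1)).2 with hq
    -- positivity of the two denominators
    have hqkey := pq_key hR q (k + d + 1) (by omega)
      (by
        intro j hj
        by_cases hs : (j : ℕ) < k + 1 ∨ (k + 1) + d < (j : ℕ)
        · rw [hq0 j hs]; simp
        · rw [hqo (j : ℕ) (by omega) (by omega)]; ring)
      (hq1 ⟨k + d + 1, by omega⟩ (by simp; omega))
    have hpkey := pq_key hR p k (by omega)
      (by
        intro j hj
        by_cases hs : (j : ℕ) < k ∨ k + d < (j : ℕ)
        · rw [hp0 j hs]; simp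
        · rw [hpo (j : ℕ) (by omega) (by omega)]; ring)
      (hp1 ⟨k, by omega⟩ rfl)
    have hqne : bform R q (eVec n (k + d + 1)) ≠ 0 := by
      rw [← hqkey.1]; exact ne_of_gt hqkey.2
    have hpne : bform R p (eVec n k) ≠ 0 := by
      rw [← hpkey.1]; exact ne_of_gt hpkey.2
    have hdef : pqAux R (d + 1) k =
        (p - (bform R p (eVec n (k + d + 1)) / bform R q (eVec n (k + d + 1))) • q,
         q - (bform R q (eVec n k) / bform R p (eVec n k)) • p) := rfl
    rw [hdef]
    refine ⟨?_, ?_, ?_, ?_, ?_, ?_⟩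
    · intro j hj
      simp only [Pi.sub_apply, Pi.smul_apply, smul_eq_mul]
      rw [hp0 j (by omega), hq0 j (by omega)]; ring
    · intro j hj
      simp only [Pi.sub_apply, Pi.smul_apply, smul_eq_mul]
      rw [hp1 j hj, hq0 j (by omega)]; ring
    · intro j hj
      simp only [Pi.sub_apply, Pi.smul_apply, smul_eq_mul]
      rw [hq0 j (by omega), hp0 j (by omega)]; ring
    · intro j hj
      simp only [Pi.sub_apply, Pi.smul_apply, smul_eq_mul]
      rw [hq1 j (by omega), hp0 j (by omega)]; ring
    · intro j h1 h2
      rw [bform_sub_smul]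
      rcases Nat.lt_or_ge j (k + d + 1) with hlt | hge
      · rw [hpo j h1 (by omega), hqo j (by omega) (by omega)]; ring
      · have : j = k + d + 1 := by omega
        subst this
        rw [div_mul_cancel₀ _ hqne]; ring
    · intro j h1 h2
      rw [bform_sub_smul]
      rcases Nat.lt_or_ge k j with hlt | hge
      · rw [hqo j (by omega) (by omega), hpo j (by omega) (by omega)]; ring
      · have : j = k := by omega
        subst this
        rw [div_mul_cancel₀ _ hpne]; ring


/-- Orthogonality of the family `p_{·,l}` with respect to `⟨v,w⟩ = vᵀ R conj w`:
distinct members are orthogonal, and each has strictly positive self-inner-product. -/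
theorem stmt4 (n : ℕ) (hn : 1 ≤ n) (R : Matrix (Fin n) (Fin n) ℂ) (hR : R.PosDef) :
    ∀ l k k' : ℕ, l ≤ n - 1 → k ≤ l → k' ≤ l →
      (k ≠ k' → bform R (pVec R k l) (star (pVec R k' l)) = 0) ∧
      0 < bform R (pVec R k l) (star (pVec R k l)) := by
  have main : ∀ l a b : ℕ, l ≤ n - 1 → a ≤ l → b ≤ l → a < b →
      bform R (pVec R a l) (star (pVec R b l)) = 0 := by
    intro l a b hl ha hb hab
    obtain ⟨-, -, -, -, hpoa, -⟩ := pq_inv hR (l - a) a (by omega)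
    obtain ⟨hp0b, -, -, -, -, -⟩ := pq_inv hR (l - b) b (by omega)
    rw [show a + (l - a) = l from by omega] at hpoa
    rw [show b + (l - b) = l from by omega] at hp0b
    unfold pVec
    rw [bform_expand]
    apply Finset.sum_eq_zero
    intro j _
    by_cases hj : b ≤ (j : ℕ) ∧ (j : ℕ) ≤ l
    · rw [hpoa (j : ℕ) (by omega) hj.2]; ring
    · rw [hp0b j (by omega)]; simp
  intro l k k' hl hk hk'
  have hkey : ∀ a : ℕ, a ≤ l →
      bform R (pVec R a l) (star (pVec R a l)) = bform R (pVec R a l) (eVec n a) ∧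
      0 < bform R (pVec R a l) (star (pVec R a l)) := by
    intro a ha
    obtain ⟨hp0, hp1, -, -, hpo, -⟩ := pq_inv hR (l - a) a (by omega)
    rw [show a + (l - a) = l from by omega] at hp0 hpo
    exact pq_key hR (pVec R a l) a (by omega)
      (by
        intro j hj
        by_cases hs : (j : ℕ) < a ∨ l < (j : ℕ)
        · rw [show pVec R a l j = 0 from hp0 j hs]; simp
        · rw [show bform R (pVec R a l) (eVec n (j : ℕ)) = 0 from hpo (j : ℕ) (by omega) (by omega)]
          ring)
      (hp1 ⟨a, by omega⟩ rfl)
  refine ⟨?_, (hkey k hk).2⟩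
  intro hne
  rcases Nat.lt_or_ge k k' with h | h
  · exact main l k k' hl hk hk' h
  · have h' : k' < k := by omega
    rw [bform_herm hR.1]
    rw [main l k' k hl hk' hk h']
    simp
end
end

section
/- (Theorem 1, prediction-error scalars) If R is an N×N Hermitian positive definite matrix that is block Toeplitz with block size n1, then for all 0 ≤ k ≤ l ≤ N−1: v_{k,l} = v_{k mod n1, l − (k sec n1)} and v'_{k,l} = v'_{k mod n1, l − (k sec n1)}. -/
open Matrix
open scoped ComplexOrder

noncomputable section

/-!
Block-Toeplitz structure says exactly that the bilinear form `vᵀ R w` is invariant under the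
shift `e_i ↦ e_{i+s}` (`s` a multiple of `n1`) on vectors supported in `[0, N - s)`. The vectors
`p_{k,l}`, `q_{k,l}` are supported in `[k, l]`, so induction on `l - k` shows that the recursion
started at `k + s` produces the shifts of `p_{k,l-s}`, `q_{k,l-s}`, and hence the same scalars.
Take `s = k sec n1`.
-/

section

variable {α : Type*} {N : ℕ}

def shiftVec [Semiring α] (s : ℕ) : (Fin N → α) →ₗ[α] Fin N → α :=
  LinearMap.pi fun j =>
    if h : s ≤ (j : ℕ) then LinearMap.proj ⟨j - s, by omega⟩ else 0

lemma shiftVec_apply [Semiring α] (s : ℕ) (v : Fin N → α) (j : Fin N) :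
    shiftVec s v j = if h : s ≤ (j : ℕ) then v ⟨j - s, by omega⟩ else 0 := by
  simp only [shiftVec, LinearMap.pi_apply]
  split <;> rfl

lemma shiftVec_eVec (s k : ℕ) : shiftVec s (eVec N k) = eVec N (k + s) := by
  ext j
  simp only [shiftVec_apply, eVec]
  split_ifs <;> simp_all; omega

lemma shiftVec_dotProduct [Semiring α] {s : ℕ} {v f g : Fin N → α}
    (hv : ∀ i : Fin N, N ≤ i + s → v i = 0)
    (hfg : ∀ i j : Fin N, (j : ℕ) = i + s → f j = g i) :
    shiftVec s v ⬝ᵥ f = v ⬝ᵥ g := by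
  symm
  refine Finset.sum_bij_ne_zero (fun i _ hi => ⟨i + s, ?_⟩) (fun _ _ _ => Finset.mem_univ _)
    (fun _ _ _ _ _ _ h => Fin.ext (by simpa using h)) (fun j _ hj => ?_) (fun i _ _ => ?_)
  · by_contra h
    exact hi (by rw [hv i (by omega), zero_mul])
  · rw [shiftVec_apply] at hj
    split_ifs at hj with hs
    · refine ⟨⟨j - s, by omega⟩, Finset.mem_univ _, ?_, Fin.ext (by simp; omega)⟩
      rwa [← hfg _ j (by simp; omega)]
    · simp at hj
  · rw [shiftVec_apply, dif_pos (by simp), hfg i _ rfl]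
    simp

def IsBlockToeplitz (s : ℕ) (R : Matrix (Fin N) (Fin N) α) : Prop :=
  ∀ (i j : ℕ) (hi : i + s < N) (hj : j + s < N),
    R ⟨i + s, hi⟩ ⟨j + s, hj⟩ = R ⟨i, by omega⟩ ⟨j, by omega⟩

lemma IsBlockToeplitz.apply_eq {s : ℕ} {R : Matrix (Fin N) (Fin N) α}
    (hR : IsBlockToeplitz s R) {i j k l : Fin N} (hk : (k : ℕ) = i + s)
    (hl : (l : ℕ) = j + s) : R k l = R i j := by
  obtain ⟨k, hk'⟩ := k
  obtain ⟨l, hl'⟩ := l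
  simp only at hk hl
  subst hk hl
  exact hR i j hk' hl'

lemma IsBlockToeplitz.mul {s : ℕ} {R : Matrix (Fin N) (Fin N) α}
    (hR : IsBlockToeplitz s R) (q : ℕ) : IsBlockToeplitz (s * q) R := by
  induction q with
  | zero => intro i j _ _; rfl
  | succ q ih =>
    intro i j hi hj
    rw [← ih i j (by lia) (by lia)]
    exact hR.apply_eq (by simp; ring) (by simp; ring)

lemma bform_shiftVec {s : ℕ} {R : Matrix (Fin N) (Fin N) ℂ} (hR : IsBlockToeplitz s R)
    {v w : Fin N → ℂ} (hv : ∀ i : Fin N, N ≤ i + s → v i = 0)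
    (hw : ∀ i : Fin N, N ≤ i + s → w i = 0) :
    bform R (shiftVec s v) (shiftVec s w) = bform R v w := by
  refine shiftVec_dotProduct hv fun i j hij => ?_
  simp only [mulVec]
  rw [dotProduct_comm, shiftVec_dotProduct hw fun k l hkl => hR.apply_eq hij hkl,
    dotProduct_comm]

lemma pqAux_apply_eq_zero_of_lt (R : Matrix (Fin N) (Fin N) ℂ) (d k : ℕ) {i : Fin N}
    (hi : k + d < i) : (pqAux R d k).1 i = 0 ∧ (pqAux R d k).2 i = 0 := by
  induction d generalizing k with
  | zero => exact ⟨if_neg (by omega), if_neg (by omega)⟩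
  | succ d ih =>
    obtain ⟨hp, -⟩ := ih k (by omega)
    obtain ⟨-, hq⟩ := ih (k + 1) (by omega)
    simp [pqAux, hp, hq]

lemma pqAux_add {s : ℕ} {R : Matrix (Fin N) (Fin N) ℂ} (hR : IsBlockToeplitz s R)
    (d k : ℕ) (hk : k + d + s < N) :
    pqAux R d (k + s) = (shiftVec s (pqAux R d k).1, shiftVec s (pqAux R d k).2) := by
  induction d generalizing k with
  | zero => simp [pqAux, shiftVec_eVec]
  | succ d ih =>
    have hsupp {v : Fin N → ℂ} (hv : ∀ i : Fin N, k + d + 1 < i → v i = 0) :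
        ∀ i : Fin N, N ≤ i + s → v i = 0 := fun i hi => hv i (by omega)
    have heVec {m : ℕ} (hm : m ≤ k + d + 1) : ∀ i : Fin N, N ≤ i + s → eVec N m i = 0 :=
      hsupp fun i hi => if_neg (by omega)
    have hp := hsupp fun i hi => (pqAux_apply_eq_zero_of_lt R d k (i := i) (by omega)).1
    have hq := hsupp fun i hi => (pqAux_apply_eq_zero_of_lt R d (k + 1) (i := i) (by omega)).2
    simp only [pqAux]
    rw [show k + s + 1 = k + 1 + s by omega, show k + s + d + 1 = k + d + 1 + s by omega,
      ih k (by omega), ih (k + 1) (by omega), ← shiftVec_eVec s (k + d + 1),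
      ← shiftVec_eVec s k]
    dsimp only
    rw [bform_shiftVec hR hp (heVec le_rfl), bform_shiftVec hR hq (heVec le_rfl),
      bform_shiftVec hR hq (heVec (by omega)), bform_shiftVec hR hp (heVec (by omega)),
      map_sub, map_smul, map_sub, map_smul]

lemma vSc_add {s : ℕ} {R : Matrix (Fin N) (Fin N) ℂ} (hR : IsBlockToeplitz s R)
    (k l : ℕ) (hkl : k + s ≤ l) (hl : l < N) : vSc R (k + s) l = vSc R k (l - s) := by
  obtain ⟨d, rfl⟩ : ∃ d, l = k + s + d := ⟨l - (k + s), by omega⟩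
  simp only [vSc, qVec, show k + s + d - s = k + d by omega, Nat.add_sub_cancel_left]
  rw [pqAux_add hR d k (by omega), show k + s + d = k + d + s by omega, ← shiftVec_eVec]
  exact bform_shiftVec hR (fun i _ => (pqAux_apply_eq_zero_of_lt R d k (by omega)).2)
    (fun i _ => if_neg (by omega))

lemma vSc'_add {s : ℕ} {R : Matrix (Fin N) (Fin N) ℂ} (hR : IsBlockToeplitz s R)
    (k l : ℕ) (hkl : k + s ≤ l) (hl : l < N) : vSc' R (k + s) l = vSc' R k (l - s) := by
  obtain ⟨d, rfl⟩ : ∃ d, l = k + s + d := ⟨l - (k + s), by omega⟩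
  simp only [vSc', pVec, show k + s + d - s = k + d by omega, Nat.add_sub_cancel_left]
  rw [pqAux_add hR d k (by omega), ← shiftVec_eVec]
  exact bform_shiftVec hR (fun i _ => (pqAux_apply_eq_zero_of_lt R d k (by omega)).1)
    (fun i _ => if_neg (by omega))

end

theorem stmt13_general (n1 n2 : ℕ) (h1 : 1 ≤ n1) (h2 : 1 ≤ n2)
    (R : Matrix (Fin (n1 * n2)) (Fin (n1 * n2)) ℂ)
    (hBT : ∀ (i j : ℕ) (hi : i + n1 < n1 * n2) (hj : j + n1 < n1 * n2),
      R ⟨i + n1, hi⟩ ⟨j + n1, hj⟩ =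
        R ⟨i, Nat.lt_of_le_of_lt (Nat.le_add_right i n1) hi⟩
          ⟨j, Nat.lt_of_le_of_lt (Nat.le_add_right j n1) hj⟩) :
    ∀ k l : ℕ, k ≤ l → l ≤ n1 * n2 - 1 →
      vSc R k l = vSc R (k % n1) (l - n1 * (k / n1)) ∧
      vSc' R k l = vSc' R (k % n1) (l - n1 * (k / n1)) := by
  intro k l hkl hl
  have hlN : l < n1 * n2 := by have := Nat.mul_pos h1 h2; omega
  have hBT' : IsBlockToeplitz (n1 * (k / n1)) R := IsBlockToeplitz.mul hBT (k / n1)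
  have hk : k % n1 + n1 * (k / n1) = k := Nat.mod_add_div k n1
  have hv := vSc_add hBT' (k % n1) l (by rwa [hk]) hlN
  have hv' := vSc'_add hBT' (k % n1) l (by rwa [hk]) hlN
  rw [hk] at hv hv'
  exact ⟨hv, hv'⟩

/-- Theorem 1 (prediction-error scalars): for a Hermitian positive definite block-Toeplitz
matrix with block size `n1`, `v_{k,l} = v_{k mod n1, l - (k sec n1)}` and
`v'_{k,l} = v'_{k mod n1, l - (k sec n1)}`, where `k sec n1 = n1 * (k / n1)`. -/
theorem stmt13 (n1 n2 : ℕ) (h1 : 1 ≤ n1) (h2 : 1 ≤ n2)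
    (R : Matrix (Fin (n1 * n2)) (Fin (n1 * n2)) ℂ) (hR : R.PosDef)
    (hBT : ∀ (i j : ℕ) (hi : i + n1 < n1 * n2) (hj : j + n1 < n1 * n2),
      R ⟨i + n1, hi⟩ ⟨j + n1, hj⟩ =
        R ⟨i, Nat.lt_of_le_of_lt (Nat.le_add_right i n1) hi⟩
          ⟨j, Nat.lt_of_le_of_lt (Nat.le_add_right j n1) hj⟩) :
    ∀ k l : ℕ, k ≤ l → l ≤ n1 * n2 - 1 →
      vSc R k l = vSc R (k % n1) (l - n1 * (k / n1)) ∧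
      vSc' R k l = vSc' R (k % n1) (l - n1 * (k / n1)) :=
  stmt13_general n1 n2 h1 h2 R hBT
end
end
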